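/- If α is an action of depth k, then for any k'-olt s^{k'} with k' ≥ k, the progress function g_{α,s^{k'}} is k-bounded: it maps every node of depth ≤ k to a node of depth ≤ k, and fixes every node of depth > k. -/

import Mathlib

noncomputable section

inductive Form (Φ : Type) : Type where
  | tru : Form Φ
  | fls : Form Φ
  | var : Φ → Form Φ
  | neg : Form Φ → Form Φ
  | and : Form Φ → Form Φ → Form Φ
  | or : Form Φ → Form Φ → Form Φ
deriving DecidableEq

namespace Form
def eval {Φ : Type} (v : Φ → Bool) : Form Φ → Bool
  | tru => true
  | fls => false
  | var p => v p
  | neg φ => !(φ.eval v)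
  | and φ ψ => φ.eval v && ψ.eval v
  | or φ ψ => φ.eval v || ψ.eval v

def Valid {Φ : Type} (φ : Form Φ) : Prop := ∀ v, φ.eval v = true
def Equiv {Φ : Type} (φ ψ : Form Φ) : Prop := ∀ v, φ.eval v = ψ.eval v
def imp {Φ : Type} (φ ψ : Form Φ) : Form Φ := .or (.neg φ) ψ
end Form

section Atoms
variable {Φ : Type} [Fintype Φ] [DecidableEq Φ]

def bigAnd {Φ : Type} (l : List (Form Φ)) : Form Φ := l.foldr .and .tru
def bigOr {Φ : Type} (l : List (Form Φ)) : Form Φ := l.foldr .or .fls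

/-- The atom `φ_a` for `a ⊆ Φ`. -/
def atomForm (a : Finset Φ) : Form Φ :=
  .and (bigAnd ((Finset.univ.filter (· ∈ a)).toList.map .var))
       (bigAnd ((Finset.univ.filter (· ∉ a)).toList.map (fun p => .neg (.var p))))

/-- `φ_A`, the disjunction of the atoms in `A`. -/
def disjForm (A : Finset (Finset Φ)) : Form Φ := bigOr (A.toList.map atomForm)

/-- The valuation corresponding to an atom. -/
def atomVal (a : Finset Φ) : Φ → Bool := fun p => p ∈ a

/-- The set of atoms whose disjunction is equivalent to `φ`. -/
def canonSet (φ : Form Φ) : Finset (Finset Φ) :=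
  Finset.univ.filter (fun a => φ.eval (atomVal a) = true)

end Atoms

inductive Act (Φ : Type) : Type where
  | noop : Act Φ
  | doa : Form Φ → Act Φ
  | ite : Form Φ → Act Φ → Act Φ → Act Φ
  | seq : Act Φ → Act Φ → Act Φ
deriving DecidableEq

/-- `HasDepth α k`: α is a depth-`k` action. -/
inductive HasDepth {Φ : Type} : Act Φ → ℕ → Prop where
  | noop : HasDepth .noop 0
  | up {α k} : HasDepth α k → HasDepth α (k+1)
  | prim {φ} : HasDepth (.doa φ) 1
  | cond {ψ α β k} : HasDepth α (k+1) → HasDepth β (k+1) → HasDepth (.ite ψ α β) (k+1)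
  | seq {α β k₁ k₂ m} : HasDepth α k₁ → HasDepth β k₂ → k₁ + k₂ ≤ m → 2 ≤ m →
      HasDepth (.seq α β) m

section Canonical
variable {Φ : Type} [Fintype Φ] [DecidableEq Φ]

/-- A fixed enumeration `a₁, …, a_N` of the atoms. -/
def atomList (Φ : Type) [Fintype Φ] [DecidableEq Φ] : List (Finset Φ) :=
  (Finset.univ : Finset (Finset Φ)).toList

/-- The nested conditional `if φ_{a₁} then c(a₁) else (… else c(a_N))`,
with trailing `noop`s trimmed. -/
def nestIf (c : Finset Φ → Act Φ) : List (Finset Φ) → Act Φ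
  | [] => .noop
  | a :: rest =>
    let r := nestIf c rest
    if c a = .noop ∧ r = .noop then .noop else .ite (atomForm a) (c a) r

/-- The canonical action determined by a canonical map `c`. -/
def gammaOf (c : Finset Φ → Act Φ) : Act Φ := nestIf c (atomList Φ)

def fuelOf {Φ : Type} : Act Φ → ℕ
  | .noop => 1
  | .doa _ => 1
  | .ite _ α β => max (fuelOf α) (fuelOf β)
  | .seq α β => fuelOf α + fuelOf β

/-- Fueled canonical map. -/
def cmapF : ℕ → Act Φ → Finset Φ → Act Φ
  | _, .noop, _ => .noop
  | _, .doa φ, _ => .doa (disjForm (canonSet φ))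
  | n, .ite ψ α β, a => if ψ.eval (atomVal a) = true then cmapF n α a else cmapF n β a
  | 0, .seq _ _, _ => .noop
  | (n+1), .seq α β, a =>
    match cmapF (n+1) α a with
    | .noop => cmapF (n+1) β a
    | .doa ψ => .seq (.doa ψ) (gammaOf (fun b => cmapF n β b))
    | .seq (.doa ψ) γ => .seq (.doa ψ) (gammaOf (fun b => cmapF n (.seq γ β) b))
    | _ => .noop
  termination_by n α _ => (n, sizeOf α)

/-- The canonical map `c_α`. -/
def cmap (α : Act Φ) : Finset Φ → Act Φ := cmapF (fuelOf α) α

/-- The canonical action `γ_α`. -/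
def gammaAct (α : Act Φ) : Act Φ := gammaOf (cmap α)

/-- `F̃ = {φ_A : ∃ φ ∈ F, ⊨ φ_A ↔ φ}`. -/
def FTilde (F : Finset (Form Φ)) : Set (Form Φ) :=
  {ψ | ∃ A : Finset (Finset Φ), ψ = disjForm A ∧ ∃ φ ∈ F, Form.Equiv (disjForm A) φ}

/-- `CA^{k,-}`: depth-`k` actions of the form `noop`, `do(φ_A)`, or `do(φ_A);γ_β`. -/
def CAminus (F : Finset (Form Φ)) (k : ℕ) : Set (Act Φ) :=
  {α | HasDepth α k ∧
    (α = .noop ∨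
     (∃ A : Finset (Finset Φ), α = .doa (disjForm A) ∧ disjForm A ∈ FTilde F) ∨
     (∃ (A : Finset (Finset Φ)) (β : Act Φ),
        α = .seq (.doa (disjForm A)) (gammaAct β) ∧ disjForm A ∈ FTilde F ∧
        HasDepth β (k-1)))}

end Canonical

section Olt
variable {Φ : Type} [Fintype Φ] [DecidableEq Φ]

/-- An (unbounded) ordered labeled tree: a root atom, plus for each node
(identified with its path from the root) a total order (ranking) of its
`N` children, which are labeled by the `N` atoms. -/
structure Olt (Φ : Type) [Fintype Φ] [DecidableEq Φ] where
  root : Finset Φ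
  ord : List (Finset Φ) → (Finset Φ ≃ Fin (Fintype.card (Finset Φ)))

/-- The closest (minimal) child of node `p` whose label lies in `A`. -/
noncomputable def minChild (s : Olt Φ) (p : List (Finset Φ)) (A : Finset (Finset Φ)) :
    Finset Φ :=
  if h : A.Nonempty then (s.ord p).symm ((A.image (s.ord p)).min' (h.image _)) else ∅

/-- The subtree rooted at the child of the root labeled `b`. -/
def subtree (s : Olt Φ) (b : Finset Φ) : Olt Φ :=
  ⟨b, fun p => s.ord (b :: p)⟩

/-- The progress function `g_{α,s}` (with fuel `k`), mapping each node of `s`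
to a descendant. -/
noncomputable def gfun : ℕ → Act Φ → Olt Φ → List (Finset Φ) → List (Finset Φ)
  | 0, _, _, t => t
  | (k+1), α, s, t =>
    match cmap α s.root with
    | .noop => t
    | .doa φ => if t = [] then [minChild s [] (canonSet φ)] else t
    | .seq (.doa φ) γ =>
      match t with
      | [] =>
        let t' := minChild s [] (canonSet φ)
        t' :: gfun k γ (subtree s t') []
      | b :: rest => b :: gfun k γ (subtree s b) rest
    | _ => t

end Olt

/-!
The progress function `g_{α,s}` only inspects the canonical map `c_α` at the root: when that is
`do(φ); γ` it descends one level and continues with `γ` in the subtree. The invariant is a depth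
for canonical actions that, unlike `HasDepth`, does not charge for trailing `noop`s: for
`α = (do φ; do χ); noop`, of depth 2, `c_α = do φ'; γ` where `c_γ` takes the value
`do χ'; noop`, of `HasDepth` 2 rather than 1. Sequential composition adds canonical depths, so
canonical maps of depth-`k` actions have canonical depth `≤ k`, and `g` of an action of
canonical depth `k` descends at most `k` levels.
-/

theorem eval_bigAnd {Φ : Type} (v : Φ → Bool) (l : List (Form Φ)) :
    (bigAnd l).eval v = true ↔ ∀ φ ∈ l, φ.eval v = true := by
  induction l with
  | nil => simp [bigAnd, Form.eval]
  | cons φ l ih => simp [bigAnd, Form.eval, ← ih]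

section CanonicalDepth
variable {Φ : Type} [Fintype Φ] [DecidableEq Φ]

theorem eval_atomForm_atomVal (a b : Finset Φ) :
    (atomForm a).eval (atomVal b) = true ↔ a = b := by
  simp [atomForm, Form.eval, eval_bigAnd, atomVal, Finset.Subset.antisymm_iff, Finset.subset_iff,
    not_imp_not]

@[simp] theorem cmapF_noop (N : ℕ) (b : Finset Φ) : cmapF N .noop b = .noop := by
  rw [cmapF]

@[simp] theorem cmapF_doa (N : ℕ) (φ : Form Φ) (b : Finset Φ) :
    cmapF N (.doa φ) b = .doa (disjForm (canonSet φ)) := by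
  rw [cmapF]

theorem cmapF_ite (N : ℕ) (ψ : Form Φ) (α β : Act Φ) (b : Finset Φ) :
    cmapF N (.ite ψ α β) b =
      if ψ.eval (atomVal b) = true then cmapF N α b else cmapF N β b := by
  rw [cmapF]

@[simp] theorem cmapF_zero_seq (α β : Act Φ) (b : Finset Φ) : cmapF 0 (.seq α β) b = .noop := by
  rw [cmapF]

theorem cmapF_seq_of_noop {N : ℕ} {α : Act Φ} (β : Act Φ) {b : Finset Φ}
    (h : cmapF (N + 1) α b = .noop) : cmapF (N + 1) (.seq α β) b = cmapF (N + 1) β b := by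
  rw [cmapF, h]

theorem cmapF_seq_of_doa {N : ℕ} {α : Act Φ} (β : Act Φ) {b : Finset Φ} {ψ : Form Φ}
    (h : cmapF (N + 1) α b = .doa ψ) :
    cmapF (N + 1) (.seq α β) b = .seq (.doa ψ) (gammaOf fun c => cmapF N β c) := by
  rw [cmapF, h]

theorem cmapF_seq_of_seq {N : ℕ} {α : Act Φ} (β : Act Φ) {b : Finset Φ} {ψ : Form Φ}
    {γ : Act Φ} (h : cmapF (N + 1) α b = .seq (.doa ψ) γ) :
    cmapF (N + 1) (.seq α β) b = .seq (.doa ψ) (gammaOf fun c => cmapF N (.seq γ β) c) := by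
  rw [cmapF, h]

theorem cmapF_nestIf (N : ℕ) (c : Finset Φ → Act Φ) {b : Finset Φ} {l : List (Finset Φ)}
    (hb : b ∈ l) : cmapF N (nestIf c l) b = cmapF N (c b) b := by
  induction l with
  | nil => simp at hb
  | cons a l ih =>
    rw [nestIf]
    split_ifs with htrim
    · rcases List.mem_cons.mp hb with rfl | hb
      · rw [htrim.1]
      · rw [← ih hb, htrim.2]
    · rw [cmapF_ite]
      by_cases hab : a = b
      · subst hab
        simp [eval_atomForm_atomVal]
      · rw [if_neg (mt (eval_atomForm_atomVal a b).mp hab)]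
        exact ih ((List.mem_cons.mp hb).resolve_left (Ne.symm hab))

theorem cmapF_gammaOf (N : ℕ) (c : Finset Φ → Act Φ) (b : Finset Φ) :
    cmapF N (gammaOf c) b = cmapF N (c b) b :=
  cmapF_nestIf N c (Finset.mem_toList.mpr (Finset.mem_univ b))

inductive CanonDepthLE : ℕ → Act Φ → Prop
  | noop (k : ℕ) : CanonDepthLE k .noop
  | doa (k : ℕ) (φ : Form Φ) : CanonDepthLE (k + 1) (.doa φ)
  | seq (k : ℕ) (φ : Form Φ) {γ : Act Φ} :
      (∀ n b, CanonDepthLE k (cmapF n γ b)) → CanonDepthLE (k + 1) (.seq (.doa φ) γ)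

namespace CanonDepthLE

theorem mono {k m : ℕ} {o : Act Φ} (h : CanonDepthLE k o) (hkm : k ≤ m) : CanonDepthLE m o := by
  induction h generalizing m with
  | noop => exact .noop m
  | doa k φ =>
    obtain ⟨m, rfl⟩ : ∃ m', m = m' + 1 := ⟨m - 1, by omega⟩
    exact doa m φ
  | seq k φ _ ih =>
    obtain ⟨m, rfl⟩ : ∃ m', m = m' + 1 := ⟨m - 1, by omega⟩
    exact seq m φ fun n b => ih n b (by omega)

theorem cmapF {k : ℕ} {o : Act Φ} (h : CanonDepthLE k o) (n : ℕ) (b : Finset Φ) :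
    CanonDepthLE k (cmapF n o b) := by
  induction h generalizing n b with
  | noop => simp [CanonDepthLE.noop]
  | doa k φ => simpa using doa k _
  | seq k φ _ ih =>
    cases n with
    | zero => simpa using noop _
    | succ n =>
      rw [cmapF_seq_of_doa _ (cmapF_doa _ φ b)]
      exact seq k _ fun n' b' => by rw [cmapF_gammaOf]; exact ih n b' n' b'

theorem seq_doa_gammaOf {k : ℕ} (ψ : Form Φ) {c : Finset Φ → Act Φ}
    (hc : ∀ b, CanonDepthLE k (c b)) : CanonDepthLE (k + 1) (.seq (.doa ψ) (gammaOf c)) :=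
  seq k ψ fun n b => by rw [cmapF_gammaOf]; exact (hc b).cmapF n b

end CanonDepthLE

theorem canonDepthLE_cmapF_seq {p q : ℕ} {γ β : Act Φ}
    (hγ : ∀ n b, CanonDepthLE p (cmapF n γ b)) (hβ : ∀ n b, CanonDepthLE q (cmapF n β b)) :
    ∀ n b, CanonDepthLE (p + q) (cmapF n (.seq γ β) b) := by
  rintro (_ | n) b
  · simpa using CanonDepthLE.noop _
  · have h := hγ (n + 1) b
    generalize hc : cmapF (n + 1) γ b = o at h
    cases h with
    | noop => rw [cmapF_seq_of_noop β hc]; exact (hβ _ _).mono (by omega)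
    | doa k ψ =>
      rw [cmapF_seq_of_doa β hc]
      exact (CanonDepthLE.seq_doa_gammaOf ψ (hβ n)).mono (by omega)
    | seq k ψ hy =>
      rw [cmapF_seq_of_seq β hc, Nat.add_right_comm]
      exact CanonDepthLE.seq_doa_gammaOf ψ (canonDepthLE_cmapF_seq hy hβ n)
termination_by p

theorem canonDepthLE_cmapF_of_hasDepth {k : ℕ} {α : Act Φ} (hd : HasDepth α k) :
    ∀ n b, CanonDepthLE k (cmapF n α b) := by
  induction hd with
  | noop => simpa using CanonDepthLE.noop 0
  | up _ ih => exact fun n b => (ih n b).mono (Nat.le_succ _)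
  | prim => simpa using CanonDepthLE.doa 0 _
  | cond _ _ ihα ihβ =>
    intro n b
    rw [cmapF_ite]
    split
    · exact ihα n b
    · exact ihβ n b
  | seq _ _ hle _ ihα ihβ => exact fun n b => (canonDepthLE_cmapF_seq ihα ihβ n b).mono hle

def DepthBounded {β : Type*} (k : ℕ) (g : List β → List β) : Prop :=
  ∀ t, (t.length ≤ k → (g t).length ≤ k) ∧ (k < t.length → g t = t)

theorem depthBounded_gfun (n : ℕ) {k : ℕ} {α : Act Φ} {s : Olt Φ}
    (h : CanonDepthLE k (cmap α s.root)) : DepthBounded k (gfun n α s) := by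
  induction n generalizing k α s with
  | zero => intro t; simp [gfun]
  | succ n ih =>
    intro t
    generalize hc : cmap α s.root = o at h
    cases h with
    | noop k => simp [gfun, hc]
    | doa k φ => rcases t with _ | ⟨b, rest⟩ <;> simp [gfun, hc]
    | seq k φ hγ =>
      rcases t with _ | ⟨b, rest⟩
      · simpa [gfun, hc] using (ih (hγ _ _) []).1 k.zero_le
      · simpa [gfun, hc] using ih (s := subtree s b) (hγ _ _) rest

end CanonicalDepth

theorem gfun_bounded_general {Φ : Type} [Fintype Φ] [DecidableEq Φ]
    (k k' : ℕ) (α : Act Φ) (s : Olt Φ) (hd : HasDepth α k)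
    (t : List (Finset Φ)) :
    (t.length ≤ k → (gfun k' α s t).length ≤ k) ∧
    (k < t.length → gfun k' α s t = t) :=
  depthBounded_gfun k' (canonDepthLE_cmapF_of_hasDepth hd _ _) t

/-- If `α` has depth `k`, then `g_{α,s}` is `k`-bounded: nodes of depth `≤ k`
are mapped to nodes of depth `≤ k`, and nodes of depth `> k` are fixed. -/
theorem gfun_bounded {Φ : Type} [Fintype Φ] [DecidableEq Φ]
    (k k' : ℕ) (α : Act Φ) (s : Olt Φ) (hd : HasDepth α k) (hk : k ≤ k')
    (t : List (Finset Φ)) :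
    (t.length ≤ k → (gfun k' α s t).length ≤ k) ∧
    (k < t.length → gfun k' α s t = t) :=
  gfun_bounded_general k k' α s hd t

end
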